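/- arXiv:1601.03919 — 5 statements merged into one kernel-verified Lean document; each statement's English description precedes it below -/
import Mathlib

section
/- Let (X,d,μ) be a metric measure space. If for every x ∈ X the function r ↦ μ(B(x,r)) is continuous on (0,∞), then μ is continuous with respect to the metric d. -/
open MeasureTheory Metric Set Filter Topology
open scoped symmDiff ENNReal

/-!
If `d(x, y) = ε`, the triangle inequality puts `B(x, r) ∆ B(y, r)` inside the annulus
`B(x, r + ε) \ B(x, r - ε)`, whose measure `μ(B(x, r + ε)) - μ(B(x, r - ε))` tends to `0`
with `ε` by continuity of `s ↦ μ(B(x, s))` at `r` (the subtraction is legitimate because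
`μ(B(x, r)) < ∞`).
-/

theorem Metric.ball_symmDiff_ball_subset {X : Type*} [PseudoMetricSpace X] (x y : X) (r : ℝ) :
    ball x r ∆ ball y r ⊆ ball x (r + dist x y) \ ball x (r - dist x y) := by
  intro z hz
  have := dist_triangle z x y
  have := dist_triangle z y x
  have := dist_comm x y
  rcases hz with ⟨hzx, hzy⟩ | ⟨hzy, hzx⟩ <;>
    simp only [mem_ball, Set.mem_sdiff, not_lt] at hzx hzy ⊢ <;> constructor <;> linarith

theorem tendsto_measure_ball_sdiff_ball {X : Type*} [PseudoMetricSpace X] [MeasurableSpace X]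
    [OpensMeasurableSpace X] {μ : Measure X} {x : X} {r : ℝ}
    (hcont : ContinuousAt (fun s => μ (ball x s)) r) (hfin : μ (ball x r) ≠ ∞) :
    Tendsto (fun ε => μ (ball x (r + ε) \ ball x (r - ε))) (𝓝[≥] 0) (𝓝 0) := by
  have hplus : Tendsto (fun ε => μ (ball x (r + ε))) (𝓝 0) (𝓝 (μ (ball x r))) :=
    hcont.tendsto.comp (by simpa using (continuous_const_add r).tendsto 0)
  have hminus : Tendsto (fun ε => μ (ball x (r - ε))) (𝓝 0) (𝓝 (μ (ball x r))) :=
    hcont.tendsto.comp (by simpa using (continuous_sub_left r).tendsto 0)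
  have hdiff : Tendsto (fun ε => μ (ball x (r + ε)) - μ (ball x (r - ε))) (𝓝[≥] 0) (𝓝 0) := by
    simpa using (ENNReal.Tendsto.sub hplus hminus (Or.inl hfin)).mono_left nhdsWithin_le_nhds
  refine hdiff.congr' (eventually_nhdsWithin_of_forall fun ε (hε : 0 ≤ ε) => ?_)
  exact (measure_sdiff (ball_subset_ball (by linarith)) measurableSet_ball.nullMeasurableSet
    (ne_top_of_le_ne_top hfin (measure_mono (ball_subset_ball (by linarith))))).symm

theorem tendsto_dist_nhdsGE_zero {X : Type*} [PseudoMetricSpace X] (x : X) :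
    Tendsto (dist x) (𝓝 x) (𝓝[≥] 0) :=
  tendsto_nhdsWithin_of_tendsto_nhds_of_eventually_within _
    (by simpa using ((continuous_const (y := x)).dist continuous_id).tendsto x)
    (Eventually.of_forall fun _ => dist_nonneg)

theorem measure_continuous_of_radial_continuity_general {X : Type*} [MetricSpace X] [MeasurableSpace X]
    [OpensMeasurableSpace X] (μ : Measure X)
    (hfin : ∀ (x : X) (r : ℝ), 0 < r → μ (ball x r) < ⊤)
    (hcont : ∀ x : X, ContinuousOn (fun r : ℝ => μ (ball x r)) (Ioi 0)) :
    ∀ (x : X) (r : ℝ), 0 < r →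
      Tendsto (fun y : X => μ ((ball x r \ ball y r) ∪ (ball y r \ ball x r)))
        (nhds x) (nhds 0) := by
  intro x r hr
  have hannulus := tendsto_measure_ball_sdiff_ball
    ((hcont x).continuousAt (Ioi_mem_nhds hr)) (hfin x r hr).ne
  exact tendsto_of_tendsto_of_tendsto_of_le_of_le tendsto_const_nhds
    (hannulus.comp (tendsto_dist_nhdsGE_zero x)) (fun _ => zero_le)
    (fun y => measure_mono (ball_symmDiff_ball_subset x y r))

/-- If for every x the function r ↦ μ(B(x,r)) is continuous on (0,∞), then
μ is continuous with respect to the metric d. -/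
theorem measure_continuous_of_radial_continuity {X : Type*} [MetricSpace X] [MeasurableSpace X]
    [OpensMeasurableSpace X] (μ : Measure X)
    (hpos : ∀ (x : X) (r : ℝ), 0 < r → 0 < μ (ball x r))
    (hfin : ∀ (x : X) (r : ℝ), 0 < r → μ (ball x r) < ⊤)
    (hcont : ∀ x : X, ContinuousOn (fun r : ℝ => μ (ball x r)) (Ioi 0)) :
    ∀ (x : X) (r : ℝ), 0 < r →
      Tendsto (fun y : X => μ ((ball x r \ ball y r) ∪ (ball y r \ ball x r)))
        (nhds x) (nhds 0) :=
  measure_continuous_of_radial_continuity_general μ hfin hcont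
end

section
/- Let X be a metric measure space with doubling measure μ (doubling constant C_μ), Ω ⊆ X open, and f ≥ 0 strongly harmonic in Ω. If B = B(x,r) is a ball with B(x,6r) ⋐ Ω, then sup_B f ≤ C_μ³ · inf_B f. -/
/-!
For `y, z ∈ B(x, r)` we have `B(z, r) ⊆ B(y, 3r) ⊆ B(z, 8r)`, and `B(y, 3r) ⋐ B(x, 6r) ⋐ Ω`.
Comparing the mean value formulas for `f z` on `B(z, r)` and `f y` on `B(y, 3r)`, positivity of `f`
bounds `f z` by `μ(B(y, 3r)) / μ(B(z, r)) · f y`, and three doublings bound that ratio by `C_μ³`.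
-/

open MeasureTheory Metric Set Filter

variable {X : Type*} [MetricSpace X] [MeasurableSpace X]

/-- A locally integrable function is strongly harmonic on an open set `Ω` if it satisfies
the mean value property for every ball compactly contained in `Ω`. -/
def StronglyHarmonicOn (μ : Measure X) (Ω : Set X) (f : X → ℝ) : Prop :=
  LocallyIntegrableOn f Ω μ ∧
    ∀ x ∈ Ω, ∀ r : ℝ, 0 < r → IsCompact (closure (ball x r)) → closure (ball x r) ⊆ Ω →
      f x = ⨍ y in ball x r, f y ∂μ

/-- Subharmonic: the value is at most the mean value over every ball compactly contained
in `Ω`. -/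
def SubharmonicMVOn (μ : Measure X) (Ω : Set X) (f : X → ℝ) : Prop :=
  LocallyIntegrableOn f Ω μ ∧
    ∀ x ∈ Ω, ∀ r : ℝ, 0 < r → IsCompact (closure (ball x r)) → closure (ball x r) ⊆ Ω →
      f x ≤ ⨍ y in ball x r, f y ∂μ

/-- Superharmonic: the value is at least the mean value over every ball compactly
contained in `Ω`. -/
def SuperharmonicMVOn (μ : Measure X) (Ω : Set X) (f : X → ℝ) : Prop :=
  LocallyIntegrableOn f Ω μ ∧
    ∀ x ∈ Ω, ∀ r : ℝ, 0 < r → IsCompact (closure (ball x r)) → closure (ball x r) ⊆ Ω →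
      ⨍ y in ball x r, f y ∂μ ≤ f x

section Averages

variable {α : Type*} [MeasurableSpace α] {μ : Measure α} {f : α → ℝ} {s t : Set α}

theorem ae_restrict_nonneg_of_forall_mem (hf : AEMeasurable f (μ.restrict t))
    (h : ∀ x ∈ t, 0 ≤ f x) : 0 ≤ᵐ[μ.restrict t] f :=
  (ae_restrict_iff₀ (nullMeasurableSet_le aemeasurable_const hf)).mpr (ae_of_all _ h)

theorem setAverage_le_mul_setAverage_of_subset (hst : s ⊆ t) (hf : IntegrableOn f t μ)
    (hf0 : 0 ≤ᵐ[μ.restrict t] f) {K : ℝ} (hK : 0 ≤ K)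
    (hμ : μ t ≤ ENNReal.ofReal K * μ s) :
    ⨍ x in s, f x ∂μ ≤ K * ⨍ x in t, f x ∂μ := by
  have havg_t : 0 ≤ ⨍ x in t, f x ∂μ := by
    rw [setAverage_eq, smul_eq_mul]
    exact mul_nonneg (inv_nonneg.mpr measureReal_nonneg) (integral_nonneg_of_ae hf0)
  rcases measureReal_nonneg.eq_or_lt' (a := μ.real s) with hs | hs
  · -- `μ.real s = 0` covers both `μ s = 0` and `μ s = ∞`; either way the average over `s` is `0`.
    rw [setAverage_eq, hs, inv_zero, zero_smul]
    positivity
  have hs_top : μ s ≠ ⊤ := fun h ↦ by simp [measureReal_def, h] at hs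
  have ht_top : μ t ≠ ⊤ := ne_top_of_le_ne_top (by finiteness) hμ
  have hμ_real : μ.real t ≤ K * μ.real s := by
    simpa [measureReal_def, ENNReal.toReal_mul, ENNReal.toReal_ofReal hK] using
      ENNReal.toReal_mono (by finiteness) hμ
  calc ⨍ x in s, f x ∂μ = (μ.real s)⁻¹ * ∫ x in s, f x ∂μ := by rw [setAverage_eq, smul_eq_mul]
    _ ≤ (μ.real s)⁻¹ * ∫ x in t, f x ∂μ := by
      gcongr
    _ = (μ.real s)⁻¹ * μ.real t * ⨍ x in t, f x ∂μ := by
      rw [mul_assoc, ← smul_eq_mul (a := μ.real t), measure_smul_setAverage f ht_top]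
    _ ≤ (μ.real s)⁻¹ * (K * μ.real s) * ⨍ x in t, f x ∂μ := by gcongr
    _ = K * ⨍ x in t, f x ∂μ := by field_simp

end Averages

theorem measure_ball_two_pow_mul_le {μ : Measure X} {C : ℝ}
    (hdbl : ∀ (x : X) (r : ℝ), 0 < r → μ (ball x (2 * r)) ≤ ENNReal.ofReal C * μ (ball x r))
    (x : X) {r : ℝ} (hr : 0 < r) (n : ℕ) :
    μ (ball x (2 ^ n * r)) ≤ ENNReal.ofReal C ^ n * μ (ball x r) := by
  induction n with
  | zero => simp
  | succ n ih =>
    calc μ (ball x (2 ^ (n + 1) * r)) = μ (ball x (2 * (2 ^ n * r))) := by ring_nf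
      _ ≤ ENNReal.ofReal C * μ (ball x (2 ^ n * r)) := hdbl x _ (by positivity)
      _ ≤ ENNReal.ofReal C * (ENNReal.ofReal C ^ n * μ (ball x r)) := by gcongr
      _ = ENNReal.ofReal C ^ (n + 1) * μ (ball x r) := by ring

theorem measure_ball_three_mul_le {μ : Measure X} {C : ℝ} (hC : 0 ≤ C)
    (hdbl : ∀ (x : X) (r : ℝ), 0 < r → μ (ball x (2 * r)) ≤ ENNReal.ofReal C * μ (ball x r))
    {y z : X} {r : ℝ} (hr : 0 < r) (hyz : dist y z < 2 * r) :
    μ (ball y (3 * r)) ≤ ENNReal.ofReal (C ^ 3) * μ (ball z r) := by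
  calc μ (ball y (3 * r)) ≤ μ (ball z (2 ^ 3 * r)) :=
        measure_mono (ball_subset_ball' (by linarith))
    _ ≤ ENNReal.ofReal C ^ 3 * μ (ball z r) := measure_ball_two_pow_mul_le hdbl z hr 3
    _ = ENNReal.ofReal (C ^ 3) * μ (ball z r) := by rw [ENNReal.ofReal_pow hC]

namespace StronglyHarmonicOn

variable {μ : Measure X} {Ω K : Set X} {f : X → ℝ}

theorem eq_setAverage_ball (hf : StronglyHarmonicOn μ Ω f) (hK : IsCompact K) (hKΩ : K ⊆ Ω)
    {x : X} {r : ℝ} (hr : 0 < r) (hxr : closure (ball x r) ⊆ K) :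
    f x = ⨍ y in ball x r, f y ∂μ :=
  hf.2 x (hKΩ (hxr (subset_closure (mem_ball_self hr)))) r hr
    (hK.of_isClosed_subset isClosed_closure hxr) (hxr.trans hKΩ)

theorem integrableOn_ball (hf : StronglyHarmonicOn μ Ω f) (hK : IsCompact K) (hKΩ : K ⊆ Ω)
    {x : X} {r : ℝ} (hxr : closure (ball x r) ⊆ K) : IntegrableOn f (ball x r) μ :=
  (hf.1.integrableOn_compact_subset (hxr.trans hKΩ)
    (hK.of_isClosed_subset isClosed_closure hxr)).mono_set subset_closure

end StronglyHarmonicOn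

theorem harnack_on_balls_general (μ : Measure X) (Cμ : ℝ) (hCμ : 1 ≤ Cμ)
    (hdbl : ∀ (x : X) (r : ℝ), 0 < r →
      μ (ball x (2 * r)) ≤ ENNReal.ofReal Cμ * μ (ball x r))
    (Ω : Set X) (f : X → ℝ) (hf : StronglyHarmonicOn μ Ω f)
    (hpos : ∀ x ∈ Ω, 0 ≤ f x) (x : X) (r : ℝ) (hr : 0 < r)
    (hcpt : IsCompact (closure (ball x (6 * r)))) (hsub : closure (ball x (6 * r)) ⊆ Ω) :
    ∀ z ∈ ball x r, ∀ y ∈ ball x r, f z ≤ Cμ ^ 3 * f y := by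
  intro z hz y hy
  have hxz := mem_ball.mp hz
  have hxy := mem_ball.mp hy
  have hzy : ball z r ⊆ ball y (3 * r) := ball_subset_ball' (by linarith [dist_triangle_right z y x])
  have hz6 : closure (ball z r) ⊆ closure (ball x (6 * r)) :=
    closure_mono (ball_subset_ball' (by linarith))
  have hy6 : closure (ball y (3 * r)) ⊆ closure (ball x (6 * r)) :=
    closure_mono (ball_subset_ball' (by linarith))
  have hf_int := hf.integrableOn_ball hcpt hsub hy6
  calc f z = ⨍ w in ball z r, f w ∂μ := hf.eq_setAverage_ball hcpt hsub hr hz6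
    _ ≤ Cμ ^ 3 * ⨍ w in ball y (3 * r), f w ∂μ :=
      setAverage_le_mul_setAverage_of_subset hzy hf_int
        (ae_restrict_nonneg_of_forall_mem hf_int.aemeasurable
          fun w hw ↦ hpos w (hsub (hy6 (subset_closure hw))))
        (by positivity)
        (measure_ball_three_mul_le (by linarith) hdbl hr (by linarith [dist_triangle_right y z x]))
    _ = Cμ ^ 3 * f y := by rw [← hf.eq_setAverage_ball hcpt hsub (by positivity) hy6]

/-- Harnack inequality on balls: if f ≥ 0 is strongly harmonic in Ω, μ is
doubling with constant C_μ, and B(x,6r) ⋐ Ω, then sup_{B(x,r)} f ≤ C_μ³ inf_{B(x,r)} f. -/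
theorem harnack_on_balls (μ : Measure X) (Cμ : ℝ) (hCμ : 1 ≤ Cμ)
    (hdbl : ∀ (x : X) (r : ℝ), 0 < r →
      μ (ball x (2 * r)) ≤ ENNReal.ofReal Cμ * μ (ball x r))
    (Ω : Set X) (hΩ : IsOpen Ω) (f : X → ℝ) (hf : StronglyHarmonicOn μ Ω f)
    (hpos : ∀ x ∈ Ω, 0 ≤ f x) (x : X) (r : ℝ) (hr : 0 < r)
    (hcpt : IsCompact (closure (ball x (6 * r)))) (hsub : closure (ball x (6 * r)) ⊆ Ω) :
    ∀ z ∈ ball x r, ∀ y ∈ ball x r, f z ≤ Cμ ^ 3 * f y :=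
  harnack_on_balls_general μ Cμ hCμ hdbl Ω f hf hpos x r hr hcpt hsub
end

section
/- On the real line with the Euclidean metric and the measure dμ = e^{-|x|} dx, the measure μ is continuous with respect to the metric, but X fails the δ-annular decay property for every δ ∈ (0,1] and every constant A: for annuli B(x,r)\B(x,r(1−1/r)) with x > r, the ratio μ(B(x,r)\B(x,r(1−1/r)))/μ(B(x,r)) converges to 1 − 1/e as r → ∞. -/
open MeasureTheory Metric Set Filter

/-- The measure dμ = e^{-|x|} dx on the real line. -/
noncomputable def expAbsMeasure : Measure ℝ :=
  MeasureTheory.volume.withDensity (fun x => ENNReal.ofReal (Real.exp (-|x|)))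

/-!
The density is at most 1, so μ is dominated by Lebesgue measure, under which two balls of
equal radius with centres x, y differ by a set of measure at most 4|x − y|.

On [0, ∞) the density is e^{-t}, so μ(B(x, r)) = 2 e^{-x} sinh r whenever r ≤ x. The annulus
B(x, r) \ B(x, r − 1) therefore carries the fraction 1 − sinh(r − 1) / sinh r → 1 − 1/e of the
ball, whereas δ-annular decay with ε = 1/r would bound that fraction by A r^{-δ} → 0.
-/

open Real Topology
open scoped symmDiff

theorem Real.volume_ball_sdiff_ball_le (u v r : ℝ) :
    volume (ball u r \ ball v r) ≤ ENNReal.ofReal (2 * |u - v|) := by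
  have hsub : ball u r \ ball v r ⊆ Ioc (u - r) (v - r) ∪ Ico (v + r) (u + r) := by
    rintro t ⟨hu, hv⟩
    rw [Real.ball_eq_Ioo] at hu hv
    by_cases ht : v - r < t
    · exact Or.inr ⟨not_lt.1 fun h => hv ⟨ht, h⟩, hu.2⟩
    · exact Or.inl ⟨hu.1, not_lt.1 ht⟩
  calc volume (ball u r \ ball v r)
      ≤ volume (Ioc (u - r) (v - r)) + volume (Ico (v + r) (u + r)) :=
        (measure_mono hsub).trans (measure_union_le _ _)
    _ ≤ ENNReal.ofReal |u - v| + ENNReal.ofReal |u - v| := by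
        rw [Real.volume_Ioc, Real.volume_Ico]
        gcongr
        · linarith [neg_abs_le (u - v)]
        · linarith [le_abs_self (u - v)]
    _ = ENNReal.ofReal (2 * |u - v|) := by
        rw [two_mul, ENNReal.ofReal_add (abs_nonneg _) (abs_nonneg _)]

theorem Real.volume_ball_symmDiff_ball_le (x y r : ℝ) :
    volume (ball x r ∆ ball y r) ≤ ENNReal.ofReal (4 * |x - y|) :=
  calc volume (ball x r ∆ ball y r)
      ≤ volume (ball x r \ ball y r) + volume (ball y r \ ball x r) := measure_union_le _ _
    _ ≤ ENNReal.ofReal (2 * |x - y|) + ENNReal.ofReal (2 * |x - y|) := by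
        gcongr
        · exact Real.volume_ball_sdiff_ball_le x y r
        · exact abs_sub_comm x y ▸ Real.volume_ball_sdiff_ball_le y x r
    _ = ENNReal.ofReal (4 * |x - y|) := by
        rw [← ENNReal.ofReal_add (by positivity) (by positivity)]
        ring_nf

theorem tendsto_measure_ball_symmDiff_ball {μ : Measure ℝ} (hμ : μ ≤ volume) (x r : ℝ) :
    Tendsto (fun y => μ (ball x r ∆ ball y r)) (𝓝 x) (𝓝 0) := by
  have hlim : Tendsto (fun y => ENNReal.ofReal (4 * |x - y|)) (𝓝 x) (𝓝 0) :=
    (ENNReal.continuous_ofReal.comp (by fun_prop)).tendsto' x 0 (by simp)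
  exact tendsto_of_tendsto_of_tendsto_of_le_of_le tendsto_const_nhds hlim (fun _ => zero_le)
    fun y => (hμ _).trans (Real.volume_ball_symmDiff_ball_le x y r)

theorem tendsto_sinh_sub_div_sinh (a : ℝ) :
    Tendsto (fun r => sinh (r - a) / sinh r) atTop (𝓝 (exp (-a))) := by
  have hv : Tendsto (fun r => exp (-r)) atTop (𝓝 0) := Real.tendsto_exp_neg_atTop_nhds_zero
  have hlim := (tendsto_const_nhds (x := exp (-a)) |>.sub
    (tendsto_const_nhds (x := exp a) |>.mul (hv.pow 2))).div
    (tendsto_const_nhds (x := (1 : ℝ)) |>.sub (hv.pow 2)) (by norm_num)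
  simp only [zero_pow two_ne_zero, mul_zero, sub_zero, div_one] at hlim
  refine hlim.congr' ?_
  filter_upwards [eventually_gt_atTop 0] with r hr
  have hsinh : sinh r ≠ 0 := (sinh_pos_iff.2 hr).ne'
  have h1 : 1 - exp (-r) ^ 2 ≠ 0 := by
    have : exp (-r) < 1 := exp_lt_one_iff.2 (neg_lt_zero.2 hr)
    nlinarith [exp_pos (-r)]
  rw [Pi.div_apply, div_eq_div_iff h1 hsinh, sinh_eq, sinh_eq]
  simp only [sub_eq_add_neg, exp_add, exp_neg]
  field_simp

instance isLocallyFiniteMeasure_expAbsMeasure : IsLocallyFiniteMeasure expAbsMeasure :=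
  .withDensity_ofReal (by fun_prop)

theorem expAbsMeasure_le_volume : expAbsMeasure ≤ volume := by
  calc expAbsMeasure ≤ volume.withDensity 1 :=
        withDensity_mono <| ae_of_all _ fun x =>
          ENNReal.ofReal_le_one.2 (exp_le_one_iff.2 (neg_nonpos.2 (abs_nonneg x)))
    _ = volume := withDensity_one

theorem expAbsMeasure_real_ball {x r : ℝ} (hr : 0 ≤ r) (hx : r ≤ x) :
    expAbsMeasure.real (ball x r) = 2 * exp (-x) * sinh r := by
  have hexp : ∀ t ∈ Ioo (x - r) (x + r),
      ENNReal.ofReal (exp (-|t|)) = ENNReal.ofReal (exp (-t)) := fun t ht => by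
    rw [abs_of_pos (by linarith [ht.1])]
  have hint : ∫ t in Ioo (x - r) (x + r), exp (-t) = exp (-(x - r)) - exp (-(x + r)) := by
    rw [← integral_Ioc_eq_integral_Ioo, ← intervalIntegral.integral_of_le (by linarith),
      intervalIntegral.integral_comp_neg (fun t => exp t), integral_exp]
  rw [measureReal_def, expAbsMeasure, withDensity_apply _ measurableSet_ball, Real.ball_eq_Ioo,
    setLIntegral_congr_fun measurableSet_Ioo hexp, ← ofReal_integral_eq_lintegral_ofReal, hint,
    ENNReal.toReal_ofReal, sinh_eq]
  · simp only [sub_eq_add_neg, neg_add, neg_neg, exp_add]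
    ring
  · exact sub_nonneg.2 (exp_le_exp.2 (by linarith))
  · exact (by fun_prop : Continuous fun t => exp (-t)).integrableOn_Icc.mono_set
      Ioo_subset_Icc_self
  · exact ae_of_all _ fun t => (exp_pos _).le

theorem expAbsMeasure_annulus_ratio_eq {x r : ℝ} (hr : 1 ≤ r) (hx : r ≤ x) :
    expAbsMeasure.real (ball x r \ ball x (r * (1 - 1 / r))) / expAbsMeasure.real (ball x r) =
      1 - sinh (r - 1) / sinh r := by
  have hr' : r * (1 - 1 / r) = r - 1 := by field_simp
  have hsinh : sinh r ≠ 0 := (sinh_pos_iff.2 (by linarith)).ne'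
  rw [hr', measureReal_sdiff (ball_subset_ball (by linarith)) measurableSet_ball,
    expAbsMeasure_real_ball (by linarith) hx, expAbsMeasure_real_ball (by linarith) (by linarith)]
  field_simp

theorem tendsto_expAbsMeasure_annulus_ratio (xc : ℝ → ℝ) (hxc : ∀ r, r < xc r) :
    Tendsto (fun r : ℝ =>
        (expAbsMeasure (ball (xc r) r \ ball (xc r) (r * (1 - 1 / r)))).toReal /
          (expAbsMeasure (ball (xc r) r)).toReal)
      atTop (𝓝 (1 - 1 / exp 1)) := by
  rw [one_div, ← exp_neg]
  refine (tendsto_const_nhds.sub (tendsto_sinh_sub_div_sinh 1)).congr' ?_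
  filter_upwards [eventually_ge_atTop 1] with r hr
  exact (expAbsMeasure_annulus_ratio_eq hr (hxc r).le).symm

theorem expAbsMeasure_not_annularDecay {δ : ℝ} (hδ : 0 < δ) (A : ℝ) :
    ¬ ∀ x r ε : ℝ, 0 < r → ε ∈ Ioo (0 : ℝ) 1 →
      expAbsMeasure (ball x r \ ball x (r * (1 - ε))) ≤
        ENNReal.ofReal (A * ε ^ δ) * expAbsMeasure (ball x r) := by
  intro H
  have hbound : ∀ᶠ r in atTop,
      (expAbsMeasure (ball (r + 1) r \ ball (r + 1) (r * (1 - 1 / r)))).toReal /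
        (expAbsMeasure (ball (r + 1) r)).toReal ≤ max (A * (1 / r) ^ δ) 0 := by
    filter_upwards [eventually_gt_atTop 1] with r hr
    have hε : 1 / r ∈ Ioo (0 : ℝ) 1 := ⟨by positivity, (div_lt_one (by linarith)).2 hr⟩
    -- `max … 0`: `ENNReal.ofReal` truncates the bound when `A < 0`.
    refine div_le_of_le_mul₀ measureReal_nonneg (le_max_right _ _) ?_
    rw [← ENNReal.toReal_ofReal', ← ENNReal.toReal_mul]
    exact ENNReal.toReal_mono (by finiteness) (H _ r _ (by linarith) hε)
  have hlim : Tendsto (fun r : ℝ => max (A * (1 / r) ^ δ) 0) atTop (𝓝 0) := by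
    have := ((tendsto_rpow_neg_atTop hδ).const_mul A).max (tendsto_const_nhds (x := (0 : ℝ)))
    rw [mul_zero, max_self] at this
    refine this.congr' ?_
    filter_upwards [eventually_gt_atTop 0] with r hr
    rw [one_div, inv_rpow hr.le, rpow_neg hr.le]
  have hratio := le_of_tendsto_of_tendsto
    (tendsto_expAbsMeasure_annulus_ratio (· + 1) (by simp)) hlim hbound
  have : 1 / exp 1 < 1 := (div_lt_one (exp_pos 1)).2 (one_lt_exp_iff.2 one_pos)
  linarith

/-- On (ℝ, |·|, e^{-|x|}dx), the measure is continuous with respect to the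
metric, yet the δ-annular decay property fails for every δ ∈ (0,1] and every A: for the
annuli B(x,r) \ B(x,r(1−1/r)) with x > r the measure ratio tends to 1 − 1/e as r → ∞. -/
theorem expAbs_measure_continuous_but_no_annular_decay :
    (∀ (x r : ℝ), 0 < r →
      Tendsto (fun y : ℝ =>
          expAbsMeasure ((ball x r \ ball y r) ∪ (ball y r \ ball x r)))
        (nhds x) (nhds 0)) ∧
    (∀ xc : ℝ → ℝ, (∀ r : ℝ, r < xc r) →
      Tendsto (fun r : ℝ =>
          (expAbsMeasure (ball (xc r) r \ ball (xc r) (r * (1 - 1 / r)))).toReal /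
            (expAbsMeasure (ball (xc r) r)).toReal)
        atTop (nhds (1 - 1 / Real.exp 1))) ∧
    (∀ δ ∈ Set.Ioc (0:ℝ) 1, ∀ A : ℝ, 1 ≤ A →
      ¬ (∀ (x r ε : ℝ), 0 < r → ε ∈ Set.Ioo (0:ℝ) 1 →
          expAbsMeasure (ball x r \ ball x (r * (1 - ε))) ≤
            ENNReal.ofReal (A * ε ^ δ) * expAbsMeasure (ball x r))) :=
  ⟨fun x r _ => tendsto_measure_ball_symmDiff_ball expAbsMeasure_le_volume x r,
    tendsto_expAbsMeasure_annulus_ratio,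
    fun _ hδ A _ => expAbsMeasure_not_annularDecay hδ.1 A⟩
end

section
/- Let (X,d,μ) be a metric measure space such that for every x, y ∈ X, liminf_{r→∞} μ(B(x,r) Δ B(y,r)) / μ(B(x,r)) = 0. Then every bounded strongly harmonic function on all of X is constant. -/
open MeasureTheory Metric Set Filter Function
open scoped ENNReal symmDiff

/-!
Applying the mean value property on `B(x,r)` and `B(y,r)` and comparing the two averages gives
`|f x - f y| ≤ 2M μ(B(x,r) ∆ B(y,r)) / μ(B(x,r))` for every `r > 0`; the right-hand side has
liminf `0` as `r → ∞`. Local integrability yields measurability of `f` only in a second countable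
space, and this comes from the measure: since balls have positive measure and `μ` is σ-finite,
every separated set is countable.
-/

namespace Metric

variable {X : Type*} [PseudoEMetricSpace X]

theorem exists_maximal_isSeparated (ε : ℝ≥0∞) (s : Set X) :
    ∃ N, Maximal (fun N ↦ N ⊆ s ∧ IsSeparated ε N) N := by
  refine zorn_subset _ fun c hc hchain ↦ ⟨⋃₀ c, ⟨sUnion_subset fun N hN ↦ (hc hN).1, ?_⟩,
    fun N hN ↦ subset_sUnion_of_mem hN⟩
  exact (pairwise_sUnion hchain.directedOn).2 fun N hN ↦ (hc hN).2

variable [MeasurableSpace X] [OpensMeasurableSpace X]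

theorem IsSeparated.countable_of_isOpenPosMeasure (μ : Measure X) [SFinite μ]
    [μ.IsOpenPosMeasure] {ε : ℝ≥0∞} {N : Set X} (hε : ε ≠ 0) (hN : IsSeparated ε N) :
    N.Countable := by
  have hdisj : Pairwise (Disjoint on fun i : N ↦ eball (i : X) (ε / 2)) := fun i j hij ↦
    eball_disjoint <| by
      rw [ENNReal.add_halves]; exact (hN i.2 j.2 (Subtype.coe_injective.ne hij)).le
  have := Measure.countable_meas_pos_of_disjoint_iUnion (μ := μ)
    (fun _ ↦ measurableSet_eball) hdisj
  rw [show {i : N | 0 < μ (eball i (ε / 2))} = univ from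
    eq_univ_of_forall fun i ↦ measure_eball_pos μ i (ENNReal.half_pos hε).ne'] at this
  exact countable_coe_iff.1 (countable_univ_iff.1 this)

theorem secondCountableTopology_of_isOpenPosMeasure (μ : Measure X) [SFinite μ]
    [μ.IsOpenPosMeasure] : SecondCountableTopology X := by
  refine EMetric.secondCountable_of_almost_dense_set fun ε hε ↦ ?_
  obtain ⟨N, hN⟩ := exists_maximal_isSeparated ε (univ : Set X)
  refine ⟨N, hN.1.2.countable_of_isOpenPosMeasure μ hε.ne', iUnion₂_eq_univ_iff.2 fun x ↦ ?_⟩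
  by_contra! hfar
  have hx : x ∈ N := hN.2 ⟨subset_univ _, hN.1.2.insert fun y hy _ ↦ not_le.1 (hfar y hy)⟩
    (subset_insert x N) (mem_insert x N)
  exact hfar x hx (by simp)

end Metric

section MeasureOfBalls

variable {X : Type*} [PseudoMetricSpace X] [MeasurableSpace X] (μ : Measure X)

theorem isOpenPosMeasure_of_measure_ball_pos (h : ∀ x r, 0 < r → 0 < μ (ball x r)) :
    μ.IsOpenPosMeasure where
  open_pos U hU := fun ⟨x, hx⟩ ↦ by
    obtain ⟨r, hr, hxU⟩ := Metric.isOpen_iff.1 hU x hx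
    exact ((h x r hr).trans_le (measure_mono hxU)).ne'

theorem sigmaFinite_of_measure_ball_lt_top (x : X) (h : ∀ r, 0 < r → μ (ball x r) < ∞) :
    SigmaFinite μ := by
  refine Measure.sigmaFinite_of_countable (countable_range fun n : ℕ ↦ ball x (n + 1)) ?_
    (by rw [sUnion_range, iUnion_ball_nat_succ])
  rintro _ ⟨n, rfl⟩
  exact h _ n.cast_add_one_pos

end MeasureOfBalls

section SetAverage

variable {α E : Type*} [MeasurableSpace α] {μ : Measure α} [NormedAddCommGroup E]
  [NormedSpace ℝ E] {f : α → E} {s t : Set α} {C : ℝ}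

theorem norm_setAverage_le_of_norm_le_const (hs : μ s ≠ ∞) (hC₀ : 0 ≤ C)
    (hC : ∀ x ∈ s, ‖f x‖ ≤ C) : ‖⨍ x in s, f x ∂μ‖ ≤ C := by
  rw [setAverage_eq, norm_smul, norm_inv, Real.norm_of_nonneg measureReal_nonneg]
  rcases (measureReal_nonneg (μ := μ) (s := s)).eq_or_lt with h0 | hpos
  · simpa [← h0] using hC₀
  · rw [inv_mul_le_iff₀ hpos, mul_comm]
    exact norm_setIntegral_le_of_norm_le_const hs.lt_top hC

theorem norm_setIntegral_sub_setIntegral_le (hs : MeasurableSet s) (ht : MeasurableSet t)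
    (hμs : μ s ≠ ∞) (hμt : μ t ≠ ∞) (hfs : IntegrableOn f s μ) (hft : IntegrableOn f t μ)
    (hC : ∀ x ∈ s ∪ t, ‖f x‖ ≤ C) :
    ‖∫ x in s, f x ∂μ - ∫ x in t, f x ∂μ‖ ≤ C * μ.real (s ∆ t) := by
  have hsplit : ∫ x in s, f x ∂μ - ∫ x in t, f x ∂μ =
      ∫ x in s \ t, f x ∂μ - ∫ x in t \ s, f x ∂μ := by
    rw [← integral_inter_add_sdiff ht hfs, ← integral_inter_add_sdiff hs hft, inter_comm t s]
    abel
  rw [hsplit, measureReal_symmDiff_eq hs ht hμs hμt, mul_add]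
  refine (norm_sub_le _ _).trans (add_le_add ?_ ?_) <;>
    refine norm_setIntegral_le_of_norm_le_const (measure_lt_top_of_subset sdiff_subset ‹_›)
      fun x hx ↦ hC x ?_
  exacts [Or.inl hx.1, Or.inr hx.1]

theorem norm_setAverage_sub_setAverage_le (hs : MeasurableSet s) (ht : MeasurableSet t)
    (hμs₀ : μ s ≠ 0) (hμs : μ s ≠ ∞) (hμt : μ t ≠ ∞) (hfs : IntegrableOn f s μ)
    (hft : IntegrableOn f t μ) (hC : ∀ x ∈ s ∪ t, ‖f x‖ ≤ C) :
    ‖⨍ x in s, f x ∂μ - ⨍ x in t, f x ∂μ‖ ≤ 2 * C * μ.real (s ∆ t) / μ.real s := by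
  have hpos : 0 < μ.real s := ENNReal.toReal_pos hμs₀ hμs
  have hC₀ : 0 ≤ C := by
    obtain ⟨x, hx⟩ := nonempty_of_measure_ne_zero hμs₀
    exact (norm_nonneg _).trans (hC x (Or.inl hx))
  set c := ⨍ x in t, f x ∂μ
  -- uses `∫ₜ f = μ(t) c`; both terms on the right are then `O(μ (s ∆ t))`
  have hkey : μ.real s • (⨍ x in s, f x ∂μ - c) =
      (∫ x in s, f x ∂μ - ∫ x in t, f x ∂μ) - (μ.real s - μ.real t) • c := by
    rw [smul_sub, measure_smul_setAverage f hμs, ← measure_smul_setAverage f hμt, sub_smul]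
    abel
  rw [le_div_iff₀ hpos, ← Real.norm_of_nonneg hpos.le, mul_comm, ← norm_smul, hkey]
  calc _ ≤ C * μ.real (s ∆ t) + |μ.real s - μ.real t| * ‖c‖ := by
        refine (norm_sub_le _ _).trans (add_le_add ?_ (norm_smul _ _).le)
        exact norm_setIntegral_sub_setIntegral_le hs ht hμs hμt hfs hft hC
    _ ≤ C * μ.real (s ∆ t) + μ.real (s ∆ t) * C := by
        gcongr
        · exact abs_measureReal_sub_le_measureReal_symmDiff' hs.nullMeasurableSet
            ht.nullMeasurableSet hμs hμt
        · exact norm_setAverage_le_of_norm_le_const hμt hC₀ fun x hx ↦ hC x (Or.inr hx)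
    _ = 2 * C * μ.real (s ∆ t) := by ring

end SetAverage

theorem nonpos_of_le_mul_toReal_of_liminf_eq_zero {ι : Type*} {l : Filter ι} [l.NeBot]
    {g : ι → ℝ≥0∞} (hg : liminf g l = 0) {a C : ℝ} (h : ∀ᶠ i in l, a ≤ C * (g i).toReal) :
    a ≤ 0 := by
  by_contra! ha
  obtain ⟨i, hi⟩ := h.exists
  have hC : 0 < C := pos_of_mul_pos_left (ha.trans_le hi) ENNReal.toReal_nonneg
  have hlow : ENNReal.ofReal (a / C) ≤ liminf g l :=
    le_liminf_of_le (by isBoundedDefault) <| h.mono fun i hi ↦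
      ENNReal.ofReal_le_of_le_toReal <| (div_le_iff₀' hC).2 hi
  rw [hg, nonpos_iff_eq_zero, ENNReal.ofReal_eq_zero] at hlow
  exact (div_pos ha hC).not_ge hlow

/-- Liouville theorem: if for all x, y,
liminf_{r→∞} μ(B(x,r) Δ B(y,r))/μ(B(x,r)) = 0, then every bounded function on X which is
locally integrable and satisfies the mean value property over all balls is constant. -/
theorem liouville_of_symmDiff_liminf {X : Type*} [MetricSpace X] [MeasurableSpace X]
    [OpensMeasurableSpace X] (μ : Measure X)
    (hpos : ∀ (x : X) (r : ℝ), 0 < r → 0 < μ (ball x r))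
    (hfin : ∀ (x : X) (r : ℝ), 0 < r → μ (ball x r) < ⊤)
    (hlim : ∀ x y : X,
      Filter.liminf (fun r : ℝ =>
          μ ((ball x r \ ball y r) ∪ (ball y r \ ball x r)) / μ (ball x r))
        Filter.atTop = 0)
    (f : X → ℝ) (hloc : LocallyIntegrable f μ)
    (hmvp : ∀ (x : X) (r : ℝ), 0 < r → f x = ⨍ y in ball x r, f y ∂μ)
    (M : ℝ) (hbdd : ∀ x : X, |f x| ≤ M) :
    ∀ x y : X, f x = f y := by
  intro x y
  have := isOpenPosMeasure_of_measure_ball_pos μ hpos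
  have := sigmaFinite_of_measure_ball_lt_top μ x (hfin x)
  have := secondCountableTopology_of_isOpenPosMeasure μ
  have hint (z : X) (r : ℝ) (hr : 0 < r) : IntegrableOn f (ball z r) μ :=
    Measure.integrableOn_of_bounded (hfin z r hr).ne hloc.aestronglyMeasurable
      (ae_of_all _ hbdd)
  have hosc (r : ℝ) (hr : 0 < r) :
      |f x - f y| ≤ 2 * M * (μ (ball x r ∆ ball y r) / μ (ball x r)).toReal := by
    rw [hmvp x r hr, hmvp y r hr, ENNReal.toReal_div, ← mul_div_assoc]
    exact norm_setAverage_sub_setAverage_le measurableSet_ball measurableSet_ball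
      (hpos x r hr).ne' (hfin x r hr).ne (hfin y r hr).ne (hint x r hr) (hint y r hr)
      fun z _ ↦ hbdd z
  have hdist : |f x - f y| ≤ 0 :=
    nonpos_of_le_mul_toReal_of_liminf_eq_zero (hlim x y) ((eventually_gt_atTop 0).mono hosc)
  exact sub_eq_zero.1 (abs_nonpos_iff.1 hdist)
end

section
/- Let (X,d,μ) be a proper metric measure space with μ(X) < ∞. Then every bounded strongly harmonic function on X is constant. -/
open MeasureTheory Metric Set Filter
open scoped Topology ENNReal

/-! Since `μ(X) < ∞` and `f` is bounded, `f` is integrable, so the averages of `f` over the balls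
`B(x, n)` converge to the average of `f` over all of `X`. By the mean value property these averages
all equal `f x`, hence `f x` is the average of `f` over `X`, whatever `x` is. -/

namespace MeasureTheory

variable {E : Type*} [NormedAddCommGroup E] [NormedSpace ℝ E]

theorem tendsto_setAverage_of_monotone {α ι : Type*} [MeasurableSpace α] {μ : Measure α}
    [Preorder ι] [(atTop : Filter ι).IsCountablyGenerated]
    {s : ι → Set α} {f : α → E} (hsm : ∀ i, MeasurableSet (s i)) (h_mono : Monotone s)
    (hfin : μ (⋃ i, s i) ≠ ∞) (hfi : IntegrableOn f (⋃ i, s i) μ) :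
    Tendsto (fun i ↦ ⨍ x in s i, f x ∂μ) atTop (𝓝 (⨍ x in ⋃ i, s i, f x ∂μ)) := by
  by_cases h0 : μ (⋃ i, s i) = 0
  · have hs0 (i : ι) : μ (s i) = 0 := measure_mono_null (subset_iUnion s i) h0
    simp only [setAverage_eq, measureReal_def, hs0, h0, ENNReal.toReal_zero, inv_zero, zero_smul]
    exact tendsto_const_nhds
  simp only [setAverage_eq, measureReal_def]
  have hmeas : Tendsto (fun i ↦ (μ (s i)).toReal) atTop (𝓝 (μ (⋃ i, s i)).toReal) :=
    (ENNReal.tendsto_toReal hfin).comp (tendsto_measure_iUnion_atTop h_mono)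
  exact (hmeas.inv₀ (ENNReal.toReal_ne_zero.2 ⟨h0, hfin⟩)).smul
    (tendsto_setIntegral_of_monotone hsm h_mono hfi)

theorem eq_average_of_forall_eq_setAverage_ball {X : Type*} [PseudoMetricSpace X]
    [MeasurableSpace X] [OpensMeasurableSpace X] {μ : Measure X} [IsFiniteMeasure μ]
    {f : X → E} (hf : Integrable f μ) {x : X}
    (hmvp : ∀ r : ℝ, 0 < r → f x = ⨍ y in ball x r, f y ∂μ) :
    f x = ⨍ y, f y ∂μ := by
  have hmono : Monotone fun n : ℕ ↦ ball x n :=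
    fun m n hmn ↦ ball_subset_ball (by exact_mod_cast hmn)
  have hlim := tendsto_setAverage_of_monotone (fun n ↦ measurableSet_ball) hmono
    (measure_ne_top μ _) (hf.integrableOn (s := ⋃ n : ℕ, ball x n))
  rw [iUnion_ball_nat, Measure.restrict_univ] at hlim
  refine tendsto_nhds_unique (tendsto_const_nhds.congr' ?_) hlim
  filter_upwards [eventually_ge_atTop 1] with n hn
  exact hmvp n (by exact_mod_cast hn)

end MeasureTheory

theorem liouville_of_finite_measure_general {X : Type*} [MetricSpace X] [ProperSpace X]
    [MeasurableSpace X] [OpensMeasurableSpace X] (μ : Measure X)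
    (hXfin : μ Set.univ < ⊤)
    (f : X → ℝ) (hloc : LocallyIntegrable f μ)
    (hmvp : ∀ (x : X) (r : ℝ), 0 < r → f x = ⨍ y in ball x r, f y ∂μ)
    (M : ℝ) (hbdd : ∀ x : X, |f x| ≤ M) :
    ∀ x y : X, f x = f y := by
  have : IsFiniteMeasure μ := ⟨hXfin⟩
  -- `ProperSpace X` makes `X` second countable, which turns local integrability into measurability.
  have hf : Integrable f μ :=
    .of_bound hloc.aestronglyMeasurable M (.of_forall hbdd)
  intro x y
  rw [eq_average_of_forall_eq_setAverage_ball hf (hmvp x),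
    eq_average_of_forall_eq_setAverage_ball hf (hmvp y)]

/-- If X is proper and μ(X) < ∞, then every bounded function satisfying the
mean value property over all balls of X (i.e. bounded strongly harmonic on X) is
constant. -/
theorem liouville_of_finite_measure {X : Type*} [MetricSpace X] [ProperSpace X]
    [MeasurableSpace X] [OpensMeasurableSpace X] (μ : Measure X)
    (hpos : ∀ (x : X) (r : ℝ), 0 < r → 0 < μ (ball x r))
    (hXfin : μ Set.univ < ⊤)
    (f : X → ℝ) (hloc : LocallyIntegrable f μ)
    (hmvp : ∀ (x : X) (r : ℝ), 0 < r → f x = ⨍ y in ball x r, f y ∂μ)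
    (M : ℝ) (hbdd : ∀ x : X, |f x| ≤ M) :
    ∀ x y : X, f x = f y :=
  liouville_of_finite_measure_general μ hXfin f hloc hmvp M hbdd
end
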